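/- arXiv:2003.05347 — 5 statements merged into one kernel-verified Lean document; each statement's English description precedes it below -/
import Mathlib

section
/- The numerical range of a bounded linear operator on a complex Hilbert space is a convex subset of the complex numbers (Toeplitz–Hausdorff theorem). -/
open scoped ComplexInnerProductSpace
open Complex

noncomputable section

variable {H : Type*} [NormedAddCommGroup H] [InnerProductSpace ℂ H] [CompleteSpace H]

/-- The numerical range W(A) = {⟨Ax,x⟩ : ‖x‖ = 1}, inner product linear in `A x`. -/
def numRange (A : H →L[ℂ] H) : Set ℂ :=
  {z | ∃ x : H, ‖x‖ = 1 ∧ ⟪x, A x⟫ = z}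

/-- The real part Re(B) = (B + B*)/2. -/
def reP (A : H →L[ℂ] H) : H →L[ℂ] H :=
  (1/2 : ℂ) • (A + ContinuousLinearMap.adjoint A)

/-- The essential numerical range: intersection of cl(W(A+K)) over compact K. -/
def essNumRange (A : H →L[ℂ] H) : Set ℂ :=
  ⋂ K : {K : H →L[ℂ] H // IsCompactOperator ⇑K}, closure (numRange (A + (K : H →L[ℂ] H)))

/-- The supremum of the real points of the spectrum of T. -/
def sMax (T : H →L[ℂ] H) : ℝ := sSup {t : ℝ | (t : ℂ) ∈ spectrum ℂ T}

/-- Fredholm: finite-dimensional kernel and cokernel. -/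
def IsFredholmOp (T : H →L[ℂ] H) : Prop :=
  FiniteDimensional ℂ (LinearMap.ker (T : H →ₗ[ℂ] H)) ∧
    FiniteDimensional ℂ (H ⧸ LinearMap.range (T : H →ₗ[ℂ] H))

/-- The essential spectrum: those z with T - z•I not Fredholm. -/
def essSpec (T : H →L[ℂ] H) : Set ℂ :=
  {z : ℂ | ¬ IsFredholmOp (T - z • (1 : H →L[ℂ] H))}

/-!
After an affine change `A ↦ c • A + d • 1`, which moves `W(A)` by `z ↦ c * z + d`, it suffices
to show that `0, 1 ∈ W(A)` forces `[0, 1] ⊆ W(A)`. Take unit vectors `x, y` with `⟪x, A x⟫ = 0`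
and `⟪y, A y⟫ = 1`, and rotate `x` by a unimodular scalar so that `⟪x, A y⟫ + ⟪y, A x⟫` is real.
Then `⟪z, A z⟫` is real along the path `z s = s • x + (1 - s) • y`, which avoids `0`, and the
intermediate value theorem applied to `⟪z s, A (z s)⟫ / ‖z s‖ ^ 2` gives every `t ∈ [0, 1]`.
-/

theorem Complex.exists_norm_eq_one_mul_eq_norm (d : ℂ) : ∃ c : ℂ, ‖c‖ = 1 ∧ c * d = ‖d‖ := by
  refine ⟨exp (-arg d * I), by simpa using norm_exp_ofReal_mul_I (-arg d), ?_⟩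
  conv_lhs => rw [← norm_mul_exp_arg_mul_I d]
  rw [mul_left_comm, ← exp_add]
  simp

section

open ComplexConjugate

variable {E : Type*} [NormedAddCommGroup E] [InnerProductSpace ℂ E]

theorem inner_smul_apply_smul (A : E →L[ℂ] E) (c : ℂ) (x : E) :
    ⟪c • x, A (c • x)⟫ = (‖c‖ ^ 2 : ℂ) * ⟪x, A x⟫ := by
  rw [map_smul, inner_smul_left, inner_smul_right, ← mul_assoc, conj_mul']

theorem exists_norm_eq_one_im_inner_cross_eq_zero (A : E →L[ℂ] E) (x y : E) :
    ∃ c : ℂ, ‖c‖ = 1 ∧ (⟪c • x, A y⟫ + ⟪y, A (c • x)⟫).im = 0 := by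
  obtain ⟨c, hc, hcd⟩ := Complex.exists_norm_eq_one_mul_eq_norm (⟪y, A x⟫ - conj ⟪x, A y⟫)
  refine ⟨c, hc, ?_⟩
  have : (c * (⟪y, A x⟫ - conj ⟪x, A y⟫)).im = 0 := by rw [hcd, ofReal_im]
  rw [map_smul, inner_smul_left, inner_smul_right]
  simp only [mul_sub, sub_im, mul_im, conj_re, conj_im, add_im] at this ⊢
  linarith

theorem eq_zero_of_smul_add_smul_eq_zero (A : E →L[ℂ] E) {x y : E} (hx : x ≠ 0)
    (hxA : ⟪x, A x⟫ = 0) (hyA : ⟪y, A y⟫ ≠ 0) {a b : ℂ} (h : a • x + b • y = 0) :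
    a = 0 ∧ b = 0 := by
  obtain rfl | hb := eq_or_ne b 0
  · simpa [hx] using h
  have hy : y = (-(b⁻¹ * a)) • x := by
    rw [neg_smul, ← smul_smul, ← smul_neg, eq_inv_smul_iff₀ hb, ← sub_eq_zero, sub_neg_eq_add,
      add_comm, h]
  exact absurd (by rw [hy, inner_smul_apply_smul, hxA, mul_zero]) hyA

theorem inner_smul_add_one_sub_smul_apply (A : E →L[ℂ] E) {x y : E} (hxA : ⟪x, A x⟫ = 0)
    (hyA : ⟪y, A y⟫ = 1) {r : ℝ} (hr : ⟪x, A y⟫ + ⟪y, A x⟫ = r) (s : ℝ) :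
    ⟪(s : ℂ) • x + ((1 - s : ℝ) : ℂ) • y, A ((s : ℂ) • x + ((1 - s : ℝ) : ℂ) • y)⟫ =
      ((s * (1 - s) * r + (1 - s) ^ 2 : ℝ) : ℂ) := by
  simp only [map_add, map_smul, inner_add_left, inner_add_right, inner_smul_left,
    inner_smul_right, hxA, hyA, conj_ofReal]
  push_cast
  linear_combination ((s : ℂ) * (1 - s)) * hr

theorem div_norm_sq_mem_numRange (A : E →L[ℂ] E) {z : E} (hz : z ≠ 0) :
    ⟪z, A z⟫ / (‖z‖ ^ 2 : ℂ) ∈ numRange A := by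
  refine ⟨(‖z‖⁻¹ : ℂ) • z, ?_, ?_⟩
  · rw [norm_smul, norm_inv, norm_real, norm_norm, inv_mul_cancel₀ (norm_ne_zero_iff.2 hz)]
  · rw [inner_smul_apply_smul, ← ofReal_inv, norm_real, norm_inv, norm_norm]
    push_cast
    field_simp

theorem mem_numRange_smul_add_smul_one (A : E →L[ℂ] E) (c d : ℂ) {z : ℂ}
    (hz : z ∈ numRange A) : c * z + d ∈ numRange (c • A + d • 1) := by
  obtain ⟨x, hx, rfl⟩ := hz
  refine ⟨x, hx, ?_⟩
  rw [add_apply, smul_apply, smul_apply, one_apply_eq_self, inner_add_right,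
    inner_smul_right, inner_smul_right, inner_self_eq_norm_sq_to_K, hx]
  simp

theorem ofReal_mem_numRange_of_zero_mem_of_one_mem {A : E →L[ℂ] E} (h0 : 0 ∈ numRange A)
    (h1 : 1 ∈ numRange A) {t : ℝ} (ht : t ∈ Set.Icc 0 1) : (t : ℂ) ∈ numRange A := by
  obtain ⟨x₀, hx₀, hx₀A⟩ := h0
  obtain ⟨y, hy, hyA⟩ := h1
  obtain ⟨c, hc, him⟩ := exists_norm_eq_one_im_inner_cross_eq_zero A x₀ y
  set x := c • x₀
  have hx : x ≠ 0 := by rw [← norm_ne_zero_iff, norm_smul, hc, hx₀]; simp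
  have hxA : ⟪x, A x⟫ = 0 := by rw [inner_smul_apply_smul, hx₀A, mul_zero]
  set r := (⟪x, A y⟫ + ⟪y, A x⟫).re
  have hr : ⟪x, A y⟫ + ⟪y, A x⟫ = r := Complex.ext rfl him
  set z : ℝ → E := fun s ↦ (s : ℂ) • x + ((1 - s : ℝ) : ℂ) • y
  have hz : ∀ s, z s ≠ 0 := fun s hs ↦ by
    obtain ⟨hs0, hs1⟩ := eq_zero_of_smul_add_smul_eq_zero A hx hxA (by simp [hyA]) hs
    norm_cast at hs0 hs1
    linarith
  have hzA (s : ℝ) := inner_smul_add_one_sub_smul_apply A hxA hyA hr s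
  set f : ℝ → ℝ := fun s ↦ (s * (1 - s) * r + (1 - s) ^ 2) / ‖z s‖ ^ 2
  have hf : Continuous f := by
    refine .div (by fun_prop) (by fun_prop) fun s ↦ pow_ne_zero 2 (norm_ne_zero_iff.2 (hz s))
  have hf0 : f 0 = 1 := by simp [f, z, hy]
  have hf1 : f 1 = 0 := by simp [f]
  obtain ⟨s, -, rfl⟩ := intermediate_value_Icc' zero_le_one hf.continuousOn (by rwa [hf0, hf1])
  convert div_norm_sq_mem_numRange A (hz s) using 1
  rw [hzA]
  simp only [f, ofReal_div, ofReal_pow]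

end

/-- Toeplitz–Hausdorff: the numerical range is convex. -/
theorem stmt0 (A : H →L[ℂ] H) : Convex ℝ (numRange A) := by
  intro a ha b hb p q _ hq hpq
  obtain rfl | hab := eq_or_ne a b
  · rwa [← add_smul, hpq, one_smul]
  set c := b - a
  have hc : c ≠ 0 := sub_ne_zero.2 hab.symm
  set B := c⁻¹ • A + (-(c⁻¹ * a)) • (1 : H →L[ℂ] H)
  have h0 : 0 ∈ numRange B := by
    convert mem_numRange_smul_add_smul_one A c⁻¹ (-(c⁻¹ * a)) ha using 1
    ring
  have h1 : 1 ∈ numRange B := by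
    convert mem_numRange_smul_add_smul_one A c⁻¹ (-(c⁻¹ * a)) hb using 1
    field_simp
    ring
  have hA : c • B + a • 1 = A := by
    rw [smul_add, smul_smul, smul_smul, mul_inv_cancel₀ hc, one_smul, mul_neg, ← mul_assoc,
      mul_inv_cancel₀ hc, one_mul, neg_smul, neg_add_cancel_right]
  have hq' : q ∈ Set.Icc (0 : ℝ) 1 := ⟨hq, by linarith⟩
  convert hA ▸ mem_numRange_smul_add_smul_one B c a
    (ofReal_mem_numRange_of_zero_mem_of_one_mem h0 h1 hq') using 1
  rw [real_smul, real_smul, eq_sub_of_add_eq hpq]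
  push_cast
  ring
end
end

section
/- If A is a compact operator on an infinite-dimensional complex Hilbert space, then the essential numerical range of A equals {0}. -/
open scoped ComplexInnerProductSpace
open Complex

noncomputable section

variable {H : Type*} [NormedAddCommGroup H] [InnerProductSpace ℂ H] [CompleteSpace H]

/-!
If `0` is not in the closure of `W(T)`, then `ε ‖x‖² ≤ |⟪x, T x⟫|` for some `ε > 0`, so `T` is
invertible by Lax–Milgram. A compact operator on an infinite-dimensional space cannot be invertible,
since the identity would then be compact; hence `0 ∈ cl W(A + K)` for every compact `K`. Conversely,
`K = -A` gives `W(A + K) ⊆ {0}`.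
-/

theorem FiniteDimensional.of_isCompactOperator_of_isUnit {𝕜 E : Type*}
    [NontriviallyNormedField 𝕜] [CompleteSpace 𝕜] [NormedAddCommGroup E] [NormedSpace 𝕜 E]
    {T : E →L[𝕜] E} (hT : IsCompactOperator T) (hunit : IsUnit T) : FiniteDimensional 𝕜 E := by
  obtain ⟨u, rfl⟩ := hunit
  have hid : ((↑u⁻¹ : E →L[𝕜] E) ∘ (u : E →L[𝕜] E) : E → E) = id := by
    ext x
    exact congrArg (· x) u.inv_mul
  exact .of_isCompactOperator_id (hid ▸ hT.clm_comp (↑u⁻¹ : E →L[𝕜] E))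

theorem inner_map_self_div_norm_sq_mem_numRange {E : Type*} [NormedAddCommGroup E]
    [InnerProductSpace ℂ E] (T : E →L[ℂ] E) {x : E} (hx : x ≠ 0) :
    ⟪x, T x⟫ / (‖x‖ ^ 2 : ℂ) ∈ numRange T := by
  have hx₀ : ‖x‖ ≠ 0 := norm_ne_zero_iff.mpr hx
  have hx' : (‖x‖ : ℂ) ≠ 0 := mod_cast hx₀
  refine ⟨(‖x‖⁻¹ : ℂ) • x, ?_, ?_⟩
  · rw [norm_smul, norm_inv, Complex.norm_real, norm_norm, inv_mul_cancel₀ hx₀]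
  · rw [map_smul, inner_smul_left, inner_smul_right, map_inv₀, Complex.conj_ofReal]
    field_simp

theorem isUnit_of_zero_notMem_closure_numRange {T : H →L[ℂ] H}
    (h0 : (0 : ℂ) ∉ closure (numRange T)) : IsUnit T := by
  obtain ⟨ε, hε, hfar⟩ : ∃ ε > 0, ∀ z ∈ numRange T, ε ≤ ‖z‖ := by
    simpa [Metric.mem_closure_iff, dist_zero_left] using h0
  refine T.isUnit_of_forall_le_norm_inner_map (c := ⟨ε, hε.le⟩) hε fun x ↦ ?_
  rcases eq_or_ne x 0 with rfl | hx
  · simp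
  have hpos : 0 < ‖x‖ ^ 2 := by positivity
  have := hfar _ (inner_map_self_div_norm_sq_mem_numRange T hx)
  rw [norm_div, norm_pow, Complex.norm_real, norm_norm, le_div_iff₀ hpos] at this
  rw [norm_inner_symm]
  exact (mul_comm (‖x‖ ^ 2) ε).trans_le this

theorem IsCompactOperator.zero_mem_closure_numRange (h : ¬ FiniteDimensional ℂ H)
    {T : H →L[ℂ] H} (hT : IsCompactOperator T) : (0 : ℂ) ∈ closure (numRange T) := by
  by_contra h0
  exact h (.of_isCompactOperator_of_isUnit hT (isUnit_of_zero_notMem_closure_numRange h0))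

/-- The essential numerical range of a compact operator is {0}. -/
theorem stmt8 (h : ¬ FiniteDimensional ℂ H) (A : H →L[ℂ] H)
    (hA : IsCompactOperator ⇑A) : essNumRange A = {0} := by
  refine Set.Subset.antisymm (fun z hz ↦ ?_) fun z hz ↦ ?_
  · have hzA : z ∈ closure (numRange (A + -A)) := Set.mem_iInter.mp hz ⟨-A, hA.neg⟩
    have hnum : numRange (A + -A) ⊆ {0} := by
      rintro _ ⟨x, -, rfl⟩
      simp
    simpa using closure_mono hnum hzA
  · rw [Set.mem_singleton_iff.mp hz]
    exact Set.mem_iInter.mpr fun K ↦ (hA.add K.2).zero_mem_closure_numRange h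
end
end

section
/- If N is a normal bounded operator on a complex Hilbert space, then the closure of the numerical range W(N) equals the closed convex hull of the spectrum σ(N). -/
open scoped ComplexInnerProductSpace
open Complex

noncomputable section

variable {H : Type*} [NormedAddCommGroup H] [InnerProductSpace ℂ H] [CompleteSpace H]

/-!
For a unit vector `x` and a real functional `f = Re (conj c * ·)` on `ℂ`, `f ⟪x, N x⟫` is the
quadratic form of the self-adjoint operator `ℜ (conj c • N)`, whose spectrum is `f '' σ(N)`;
so `f ⟪x, N x⟫ ≤ sup f(σ(N))`, and Hahn–Banach puts `W(N)` inside the closed convex hull of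
`σ(N)`.

Conversely, let `z = ∑ w_l l` be a convex combination of distinct points `l ∈ σ(N)`. Bump
functions `F_l` of the functional calculus, equal to `1` near `l` and with pairwise disjoint
supports of radius `δ`, have unit fixed vectors `u_l = F_l(N) u_l`. These are orthonormal, satisfy
`⟪u_l, N u_m⟫ = 0` for `l ≠ m` and `‖N u_l - l u_l‖ ≤ δ`, so `x = ∑ √w_l u_l` is a unit vector
with `‖⟪x, N x⟫ - z‖ ≤ δ`.
-/

open ContinuousLinearMap ComplexStarModule Pointwise Filter Topology

lemma Finset.exists_pos_forall_le_dist {α : Type*} [MetricSpace α] (t : Finset α) :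
    ∃ δ > 0, ∀ x ∈ t, ∀ y ∈ t, x ≠ y → δ ≤ dist x y := by
  have hsep : ∀ᶠ δ in 𝓝[>] (0 : ℝ), ∀ x ∈ t, ∀ y ∈ t, x ≠ y → δ ≤ dist x y := by
    simp only [eventually_all_finset, eventually_imp_distrib_left]
    exact fun x _ y _ hxy => nhdsWithin_le_nhds (eventually_le_nhds (dist_pos.2 hxy))
  obtain ⟨δ, hδ, hδpos⟩ := (hsep.and self_mem_nhdsWithin).exists
  exact ⟨δ, hδpos, hδ⟩

lemma ContDiffBump.mul_eq_zero_of_rOut_add_rOut_le_dist {E : Type*} [NormedAddCommGroup E]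
    [InnerProductSpace ℝ E] {c d : E} (f : ContDiffBump c) (g : ContDiffBump d)
    (h : f.rOut + g.rOut ≤ dist c d) (x : E) : f x * g x = 0 := by
  rcases le_or_gt f.rOut (dist x c) with hx | hx
  · rw [f.zero_of_le_dist hx, zero_mul]
  · have : g.rOut ≤ dist x d := by linarith [dist_triangle_left c d x]
    rw [g.zero_of_le_dist this, mul_zero]

lemma ContDiffBump.norm_sub_mul_le {c : ℂ} (f : ContDiffBump c) (x : ℂ) :
    ‖(x - c) * (f x : ℂ)‖ ≤ f.rOut := by
  rcases le_or_gt f.rOut (dist x c) with hx | hx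
  · simp [f.zero_of_le_dist hx, f.rOut_pos.le]
  · rw [norm_mul, Complex.norm_real, Real.norm_of_nonneg f.nonneg, ← dist_eq_norm]
    exact (mul_le_of_le_one_right dist_nonneg f.le_one).trans hx.le

section InnerSum

variable {E : Type*} [NormedAddCommGroup E] [InnerProductSpace ℂ E] {ι : Type*}

lemma inner_sum_smul_apply_sum_smul (T : E →L[ℂ] E) (s : Finset ι) (v : ι → E) (c : ι → ℂ)
    (h : ∀ i ∈ s, ∀ j ∈ s, i ≠ j → ⟪v i, T (v j)⟫ = 0) :
    ⟪∑ i ∈ s, c i • v i, T (∑ i ∈ s, c i • v i)⟫ =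
      ∑ i ∈ s, starRingEnd ℂ (c i) * c i * ⟪v i, T (v i)⟫ := by
  simp only [map_sum, map_smul, sum_inner, inner_sum, inner_smul_left, inner_smul_right]
  refine Finset.sum_congr rfl fun i hi => ?_
  rw [Finset.sum_eq_single i (fun j hj hji => by simp [h j hj i hi hji])
    (fun hi' => absurd hi hi')]
  ring

lemma exists_norm_eq_one_norm_inner_sub_sum_le (T : E →L[ℂ] E) (s : Finset ι) {w : ι → ℝ}
    (hw₀ : ∀ i ∈ s, 0 ≤ w i) (hw₁ : ∑ i ∈ s, w i = 1) (v : ι → E) (z : ι → ℂ) {δ : ℝ}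
    (hv : ∀ i ∈ s, ‖v i‖ = 1) (horth : ∀ i ∈ s, ∀ j ∈ s, i ≠ j → ⟪v i, v j⟫ = 0)
    (hT : ∀ i ∈ s, ∀ j ∈ s, i ≠ j → ⟪v i, T (v j)⟫ = 0)
    (happrox : ∀ i ∈ s, ‖T (v i) - z i • v i‖ ≤ δ) :
    ∃ x : E, ‖x‖ = 1 ∧ ‖⟪x, T x⟫ - ∑ i ∈ s, w i • z i‖ ≤ δ := by
  set x := ∑ i ∈ s, (√(w i) : ℂ) • v i
  have hsq : ∀ i ∈ s, starRingEnd ℂ (√(w i) : ℂ) * √(w i) = w i := fun i hi => by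
    rw [Complex.conj_ofReal, ← Complex.ofReal_mul, Real.mul_self_sqrt (hw₀ i hi)]
  have hTx : ⟪x, T x⟫ = ∑ i ∈ s, w i • ⟪v i, T (v i)⟫ := by
    rw [inner_sum_smul_apply_sum_smul T s v _ hT]
    exact Finset.sum_congr rfl fun i hi => by rw [hsq i hi, Complex.real_smul]
  have hxx : ⟪x, x⟫ = 1 := by
    have := inner_sum_smul_apply_sum_smul 1 s v (fun i => (√(w i) : ℂ)) horth
    simp only [one_apply_eq_self] at this
    rw [this, ← Complex.ofReal_one, ← hw₁, Complex.ofReal_sum]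
    refine Finset.sum_congr rfl fun i hi => ?_
    rw [hsq i hi, inner_self_eq_norm_sq_to_K, hv i hi]
    simp
  refine ⟨x, ?_, ?_⟩
  · refine (pow_eq_one_iff_of_nonneg (norm_nonneg x) two_ne_zero).1 ?_
    rw [← inner_self_eq_norm_sq (𝕜 := ℂ), hxx, RCLike.one_re]
  have hclose : ∀ i ∈ s, ‖⟪v i, T (v i)⟫ - z i‖ ≤ δ := fun i hi => by
    calc ‖⟪v i, T (v i)⟫ - z i‖ = ‖⟪v i, T (v i) - z i • v i⟫‖ := by
          rw [inner_sub_right, inner_smul_right, inner_self_eq_norm_sq_to_K, hv i hi]; simp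
      _ ≤ ‖v i‖ * ‖T (v i) - z i • v i‖ := norm_inner_le_norm _ _
      _ ≤ δ := by rw [hv i hi, one_mul]; exact happrox i hi
  calc ‖⟪x, T x⟫ - ∑ i ∈ s, w i • z i‖ = ‖∑ i ∈ s, w i • (⟪v i, T (v i)⟫ - z i)‖ := by
        simp only [hTx, smul_sub, Finset.sum_sub_distrib]
    _ ≤ ∑ i ∈ s, w i * δ := by
        refine (norm_sum_le _ _).trans (Finset.sum_le_sum fun i hi => ?_)
        rw [norm_smul, Real.norm_of_nonneg (hw₀ i hi)]
        exact mul_le_mul_of_nonneg_left (hclose i hi) (hw₀ i hi)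
    _ = δ := by rw [← Finset.sum_mul, hw₁, one_mul]

end InnerSum

lemma inner_realPart_apply_self (T : H →L[ℂ] H) (x : H) :
    ⟪x, (ℜ T : H →L[ℂ] H) x⟫ = ((⟪x, T x⟫).re : ℂ) := by
  rw [realPart_apply_coe, Complex.re_eq_add_conj, star_eq_adjoint, smul_apply, add_apply,
    inner_smul_right_eq_smul, inner_add_right, adjoint_inner_right, inner_conj_symm,
    Complex.real_smul]
  push_cast
  ring

lemma re_inner_le_of_forall_re_le (N : H →L[ℂ] H) [IsStarNormal N] {r : ℝ}
    (h : ∀ μ ∈ spectrum ℂ N, μ.re ≤ r) (x : H) : (⟪x, N x⟫).re ≤ r * ‖x‖ ^ 2 := by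
  have hle : (ℜ N : H →L[ℂ] H) ≤ algebraMap ℝ _ r := by
    refine le_algebraMap_of_spectrum_le (fun t ht => ?_) (ℜ N).2
    rw [spectrum_realPart' N] at ht
    obtain ⟨μ, hμ, rfl⟩ := ht
    exact h μ hμ
  have hpos := ((nonneg_iff_isPositive _).1 (sub_nonneg.2 hle)).re_inner_nonneg_right x
  rw [sub_apply, inner_sub_right, map_sub, inner_realPart_apply_self,
    Algebra.algebraMap_eq_smul_one, smul_apply, one_apply_eq_self, inner_smul_right_eq_smul,
    inner_self_eq_norm_sq_to_K] at hpos
  simpa [← Complex.ofReal_pow] using hpos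

lemma apply_inner_le_of_forall_mem_spectrum [Nontrivial H] (N : H →L[ℂ] H) [IsStarNormal N]
    (f : ℂ →L[ℝ] ℝ) {r : ℝ} (h : ∀ μ ∈ spectrum ℂ N, f μ ≤ r) (x : H) :
    f ⟪x, N x⟫ ≤ r * ‖x‖ ^ 2 := by
  set c := (InnerProductSpace.toDual ℝ ℂ).symm f
  have hf (w : ℂ) : f w = (starRingEnd ℂ c * w).re := by
    rw [← InnerProductSpace.toDual_symm_apply, Complex.inner, mul_comm]
  have hσ : spectrum ℂ (starRingEnd ℂ c • N) = starRingEnd ℂ c • spectrum ℂ N :=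
    spectrum.smul_eq_smul _ _ (spectrum.nonempty N)
  rw [hf, ← inner_smul_right, ← smul_apply]
  refine re_inner_le_of_forall_re_le _ (fun μ hμ => ?_) x
  rw [hσ] at hμ
  obtain ⟨ν, hν, rfl⟩ := hμ
  simpa [hf] using h ν hν

lemma numRange_subset_closure_convexHull [Nontrivial H] (N : H →L[ℂ] H) [IsStarNormal N] :
    numRange N ⊆ closure (convexHull ℝ (spectrum ℂ N)) := by
  rintro _ ⟨x, hx, rfl⟩
  by_contra hz
  obtain ⟨f, r, hfr, hrz⟩ := geometric_hahn_banach_closed_point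
    (convex_convexHull ℝ _).closure isClosed_closure hz
  have := apply_inner_le_of_forall_mem_spectrum N f
    (fun μ hμ => (hfr μ (subset_closure (subset_convexHull ℝ _ hμ))).le) x
  rw [hx] at this
  linarith

lemma inner_cfc_apply_cfc_apply (N : H →L[ℂ] H) {f g : ℂ → ℂ}
    (hf : ContinuousOn f (spectrum ℂ N)) (hg : ContinuousOn g (spectrum ℂ N)) (u v : H) :
    ⟪cfc f N u, cfc g N v⟫ = ⟪u, cfc (fun w => star (f w) * g w) N v⟫ := by
  rw [cfc_mul (fun w => star (f w)) g N, cfc_star f N, mul_apply_eq_comp, star_eq_adjoint,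
    adjoint_inner_right]

lemma inner_apply_cfc_eq_zero (N : H →L[ℂ] H) {F G : ℂ → ℂ} (h : ℂ → ℂ)
    (hF : ContinuousOn F (spectrum ℂ N)) (hG : ContinuousOn G (spectrum ℂ N))
    (hh : ContinuousOn h (spectrum ℂ N)) (hFG : ∀ w ∈ spectrum ℂ N, star (F w) * G w = 0)
    {u v : H} (hu : cfc F N u = u) (hv : cfc G N v = v) : ⟪u, cfc h N v⟫ = 0 := by
  rw [← hu, ← hv, ← mul_apply_eq_comp, ← cfc_mul h G N,
    inner_cfc_apply_cfc_apply N (g := fun w => h w * G w) hF (hh.mul hG),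
    cfc_congr (g := 0) fun w hw => by rw [mul_left_comm, hFG w hw, mul_zero, Pi.zero_apply],
    cfc_zero, zero_apply, inner_zero_right]

lemma norm_apply_sub_smul_le (N : H →L[ℂ] H) [IsStarNormal N] {F : ℂ → ℂ}
    (hF : ContinuousOn F (spectrum ℂ N)) {l : ℂ} {δ : ℝ} (hδ : 0 ≤ δ)
    (hFδ : ∀ w ∈ spectrum ℂ N, ‖(w - l) * F w‖ ≤ δ) {u : H} (hu : cfc F N u = u) :
    ‖N u - l • u‖ ≤ δ * ‖u‖ := by
  have hsub : N u - l • u = cfc (fun w => (w - l) * F w) N u := by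
    rw [cfc_mul (fun w => w - l) F N, cfc_sub (fun w => w) (fun _ => l) N, cfc_id' ℂ N,
      cfc_const l N, mul_apply_eq_comp, hu, sub_apply, Algebra.algebraMap_eq_smul_one, smul_apply,
      one_apply_eq_self]
  rw [hsub]
  exact le_of_opNorm_le _ (norm_cfc_le hδ hFδ) u

lemma exists_norm_eq_one_cfc_apply_eq_self (N : H →L[ℂ] H) [IsStarNormal N] {l : ℂ}
    (hl : l ∈ spectrum ℂ N) {F : ℂ → ℂ} (hFc : ContinuousOn F (spectrum ℂ N)) (hF : F =ᶠ[𝓝 l] 1) :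
    ∃ u : H, ‖u‖ = 1 ∧ cfc F N u = u := by
  obtain ⟨r, hr, hball⟩ := Metric.eventually_nhds_iff_ball.1 hF
  -- `G(N) ≠ 0` because `G l = 1` with `l ∈ σ(N)`, and `F(N)` fixes the range of `G(N)`
  -- since `F * G = G`.
  let G : ContDiffBump l := ⟨r / 2, r, half_pos hr, half_lt_self hr⟩
  have hGc : ContinuousOn (fun w => (G w : ℂ)) (spectrum ℂ N) :=
    (Complex.continuous_ofReal.comp G.continuous).continuousOn
  have hFG : ∀ w, F w * G w = G w := fun w => by
    rcases lt_or_ge (dist w l) r with hw | hw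
    · rw [hball w hw, Pi.one_apply, one_mul]
    · rw [G.zero_of_le_dist hw, Complex.ofReal_zero, mul_zero]
  have hG : cfc (fun w => (G w : ℂ)) N ≠ 0 := fun h0 => by
    have := norm_apply_le_norm_cfc (fun w => (G w : ℂ)) N hl
    norm_num [G.one_of_mem_closedBall (Metric.mem_closedBall_self G.rIn_pos.le), h0] at this
  obtain ⟨y, hy⟩ : ∃ y, cfc (fun w => (G w : ℂ)) N y ≠ 0 := by
    by_contra! h
    exact hG (ext h)
  refine ⟨‖cfc (fun w => (G w : ℂ)) N y‖⁻¹ • cfc (fun w => (G w : ℂ)) N y,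
    norm_smul_inv_norm hy, ?_⟩
  rw [map_smul_of_tower, ← mul_apply_eq_comp, ← cfc_mul F (fun w => (G w : ℂ)) N, funext hFG]

lemma convexHull_spectrum_subset_closure_numRange (N : H →L[ℂ] H) [IsStarNormal N] :
    convexHull ℝ (spectrum ℂ N) ⊆ closure (numRange N) := by
  intro z hz
  rw [convexHull_eq_union_convexHull_finite_subsets, Set.mem_iUnion₂] at hz
  obtain ⟨t, ht, hz⟩ := hz
  obtain ⟨w, hw₀, hw₁, rfl⟩ := Finset.mem_convexHull'.1 hz
  refine Metric.mem_closure_iff.2 fun ε hε => ?_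
  obtain ⟨δ₀, hδ₀, hsep⟩ := t.exists_pos_forall_le_dist
  set δ := min (ε / 2) (δ₀ / 2)
  have hδ : 0 < δ := by positivity
  let b (l : ℂ) : ContDiffBump l := ⟨δ / 2, δ, half_pos hδ, half_lt_self hδ⟩
  have hbc (l : ℂ) : ContinuousOn (fun w => (b l w : ℂ)) (spectrum ℂ N) :=
    (Complex.continuous_ofReal.comp (b l).continuous).continuousOn
  have hb1 (l : ℂ) : (fun w => (b l w : ℂ)) =ᶠ[𝓝 l] 1 := by
    filter_upwards [(b l).eventuallyEq_one] with w hw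
    simp [hw]
  choose! u hu₁ hu using fun l (hl : l ∈ t) =>
    exists_norm_eq_one_cfc_apply_eq_self N (ht hl) (hbc l) (hb1 l)
  have hdisj : ∀ l ∈ t, ∀ m ∈ t, l ≠ m → ∀ w ∈ spectrum ℂ N, star (b l w : ℂ) * b m w = 0 :=
    fun l hl m hm hlm w _ => by
      rw [Complex.star_def, Complex.conj_ofReal, ← Complex.ofReal_mul,
        (b l).mul_eq_zero_of_rOut_add_rOut_le_dist (b m) ?_ w, Complex.ofReal_zero]
      linarith [hsep l hl m hm hlm, min_le_right (ε / 2) (δ₀ / 2)]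
  obtain ⟨x, hx, hxz⟩ := exists_norm_eq_one_norm_inner_sub_sum_le N t hw₀ hw₁ u (fun l => l) hu₁
    (fun l hl m hm hlm => by
      simpa [cfc_one ℂ N] using inner_apply_cfc_eq_zero N 1 (hbc l) (hbc m) continuousOn_const
        (hdisj l hl m hm hlm) (hu l hl) (hu m hm))
    (fun l hl m hm hlm => by
      simpa [cfc_id' ℂ N] using inner_apply_cfc_eq_zero N (fun w => w) (hbc l) (hbc m)
        continuousOn_id (hdisj l hl m hm hlm) (hu l hl) (hu m hm))
    (fun l hl => by
      simpa [hu₁ l hl] using norm_apply_sub_smul_le N (hbc l) hδ.le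
        (fun w _ => (b l).norm_sub_mul_le w) (hu l hl))
  refine ⟨_, ⟨x, hx, rfl⟩, ?_⟩
  rw [dist_comm, dist_eq_norm]
  linarith [min_le_left (ε / 2) (δ₀ / 2)]

/-- For a normal operator, cl(W(N)) is the closed convex hull of the spectrum. -/
theorem stmt9 [Nontrivial H] (N : H →L[ℂ] H)
    (hN : N * ContinuousLinearMap.adjoint N = ContinuousLinearMap.adjoint N * N) :
    closure (numRange N) = closure (convexHull ℝ (spectrum ℂ N)) := by
  have : IsStarNormal N := ⟨by rw [star_eq_adjoint]; exact hN.symm⟩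
  exact (closure_minimal (numRange_subset_closure_convexHull N) isClosed_closure).antisymm
    (closure_minimal (convexHull_spectrum_subset_closure_numRange N) isClosed_closure)
end
end

section
/- Let N be the bounded diagonal operator on ℓ²(ℕ) (with the index starting at 1) with diagonal entries e^{i/k} for k ∈ ℕ, k ≥ 1. Then the numerical range W(N) is contained in the closed unit disk, the closure of W(N) contains infinitely many points of the unit circle, yet W(N) is not equal to the closed unit disk (in particular, −1 ∉ cl(W(N))). -/
open scoped ComplexInnerProductSpace
open Complex

noncomputable section

variable {H : Type*} [NormedAddCommGroup H] [InnerProductSpace ℂ H] [CompleteSpace H]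

/-!
For a unit vector `x`, `⟪x, N x⟫ = ∑ ‖x k‖² e^{i/k}` is an infinite convex combination of the
diagonal entries, so it lies in every closed convex set containing them, and so does the closure
of `W(N)`. The entries `e^{i/k}` lie on the arc `{e^{iθ} : 0 < θ ≤ 1}`, hence in the closed
convex set `{|z| ≤ 1, Re z ≥ cos 1}`, which misses `-1`. On the other hand each
`e^{i/k} = ⟪e_k, N e_k⟫` is itself in `W(N)`, and these points of the unit circle are distinct.
-/

open Filter Topology

theorem HasSum.mem_of_convex_of_isClosed {ι E : Type*} [AddCommGroup E] [Module ℝ E]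
    [TopologicalSpace E] [ContinuousSMul ℝ E] {S : Set E} (hconv : Convex ℝ S)
    (hclosed : IsClosed S) {w : ι → ℝ} {d : ι → E} {z : E} (hw0 : ∀ i, 0 ≤ w i)
    (hw : HasSum w 1) (hd : ∀ i, d i ∈ S) (hz : HasSum (fun i => w i • d i) z) : z ∈ S := by
  have hlim : Tendsto (fun F : Finset ι => F.centerMass w d) atTop (𝓝 z) := by
    simpa only [Finset.centerMass, inv_one, one_smul, SummationFilter.unconditional_filter]
      using (hw.inv₀ one_ne_zero).smul hz
  refine hclosed.mem_of_tendsto hlim ?_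
  filter_upwards [Tendsto.eventually_const_lt zero_lt_one hw] with F hF
  exact hconv.centerMass_mem (fun i _ => hw0 i) hF (fun i _ => hd i)

section Diagonal

variable {ι : Type*} {d : ι → ℂ} {N : lp (fun _ : ι => ℂ) 2 →L[ℂ] lp (fun _ : ι => ℂ) 2}

theorem hasSum_inner_diagonal (hN : ∀ x k, N x k = d k * x k) (x : lp (fun _ : ι => ℂ) 2) :
    HasSum (fun k => ‖x k‖ ^ 2 • d k) ⟪x, N x⟫ := by
  refine (lp.hasSum_inner x (N x)).congr_fun fun k => ?_
  rw [hN, RCLike.inner_apply, mul_assoc, Complex.mul_conj', Complex.real_smul]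
  push_cast
  ring

theorem numRange_diagonal_subset (hN : ∀ x k, N x k = d k * x k) {S : Set ℂ}
    (hconv : Convex ℝ S) (hclosed : IsClosed S) (hd : ∀ k, d k ∈ S) : numRange N ⊆ S := by
  rintro _ ⟨x, hx, rfl⟩
  have hw : HasSum (fun k => ‖x k‖ ^ 2) 1 := by
    simpa [hx] using lp.hasSum_norm (p := 2) (by norm_num) x
  exact hw.mem_of_convex_of_isClosed hconv hclosed (fun k => by positivity) hd
    (hasSum_inner_diagonal hN x)

theorem diagonal_mem_numRange (hN : ∀ x k, N x k = d k * x k) (k : ι) :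
    d k ∈ numRange N := by
  classical
  refine ⟨lp.single 2 k 1, by simp [lp.norm_single], ?_⟩
  simp [lp.inner_single_left, hN, RCLike.inner_apply]

end Diagonal

theorem Complex.I_div_pnat (k : ℕ+) : I / (k : ℂ) = ((k : ℝ)⁻¹ : ℝ) * I := by
  push_cast; ring

theorem PNat.inv_mem_Ioc_zero_one (k : ℕ+) : (k : ℝ)⁻¹ ∈ Set.Ioc 0 1 :=
  ⟨by positivity, inv_le_one_of_one_le₀ (Nat.one_le_cast.mpr k.pos)⟩

theorem Complex.arg_exp_I_div_pnat (k : ℕ+) : arg (exp (I / k)) = (k : ℝ)⁻¹ := by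
  obtain ⟨hpos, hle⟩ := k.inv_mem_Ioc_zero_one
  rw [I_div_pnat, arg_exp_mul_I, toIocMod_eq_self]
  constructor <;> linarith [Real.pi_gt_three]

theorem Complex.norm_exp_I_div_pnat (k : ℕ+) : ‖exp (I / k)‖ = 1 := by
  rw [I_div_pnat]; exact norm_exp_ofReal_mul_I _

theorem Complex.cos_one_le_re_exp_I_div_pnat (k : ℕ+) : Real.cos 1 ≤ (exp (I / k)).re := by
  obtain ⟨hpos, hle⟩ := k.inv_mem_Ioc_zero_one
  rw [I_div_pnat, exp_ofReal_mul_I_re]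
  exact Real.cos_le_cos_of_nonneg_of_le_pi hpos.le (by linarith [Real.pi_gt_three]) hle

theorem Complex.injective_exp_I_div_pnat : Function.Injective fun k : ℕ+ => exp (I / k) := by
  intro j k hjk
  have h := congrArg arg hjk
  simp only [arg_exp_I_div_pnat, inv_inj, Nat.cast_inj, PNat.coe_inj] at h
  exact h

/-- A diagonal operator with entries e^{i/k}: W(N) is inside the closed unit disk, cl(W(N))
meets the unit circle at infinitely many points, but W(N) is not the closed disk and
-1 ∉ cl(W(N)). -/
theorem stmt14 (N : lp (fun _ : ℕ+ => ℂ) 2 →L[ℂ] lp (fun _ : ℕ+ => ℂ) 2)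
    (hN : ∀ (x : lp (fun _ : ℕ+ => ℂ) 2) (k : ℕ+),
      N x k = Complex.exp (Complex.I / (k : ℂ)) * x k) :
    numRange N ⊆ Metric.closedBall (0:ℂ) 1 ∧
      (closure (numRange N) ∩ Metric.sphere (0:ℂ) 1).Infinite ∧
      numRange N ≠ Metric.closedBall (0:ℂ) 1 ∧
      (-1 : ℂ) ∉ closure (numRange N) := by
  set S : Set ℂ := Metric.closedBall 0 1 ∩ {z | Real.cos 1 ≤ z.re}
  have hS : IsClosed S :=
    Metric.isClosed_closedBall.inter (isClosed_le continuous_const continuous_re)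
  have hsub : numRange N ⊆ S :=
    numRange_diagonal_subset hN ((convex_closedBall 0 1).inter (convex_halfSpace_re_ge _)) hS
      fun k => ⟨by simp [norm_exp_I_div_pnat], cos_one_le_re_exp_I_div_pnat k⟩
  have hneg : (-1 : ℂ) ∉ closure (numRange N) := fun h => by
    have : Real.cos 1 ≤ -1 := (closure_minimal hsub hS h).2
    linarith [Real.cos_one_pos]
  refine ⟨hsub.trans Set.inter_subset_left, ?_,
    fun h => hneg (subset_closure (by simp [h])), hneg⟩
  exact Set.infinite_of_injective_forall_mem injective_exp_I_div_pnat fun k =>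
    ⟨subset_closure (diagonal_mem_numRange hN k), by simp [norm_exp_I_div_pnat]⟩
end
end

section
/- Let A be the diagonal operator on ℓ²(ℕ) with diagonal entries 1 (at index 0) and i/k (at index k ≥ 1). Then A is compact, the closure of its numerical range equals the convex hull of {0, 1, i}, but no point of the half-open segment [0,1) ⊂ ℝ lies in W(A). -/
open scoped ComplexInnerProductSpace
open Complex

noncomputable section

variable {H : Type*} [NormedAddCommGroup H] [InnerProductSpace ℂ H] [CompleteSpace H]

/-!
`A` is the diagonal operator with diagonal `d = (1, i, i/2, i/3, …)`, and for a unit vector `x`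
the value `⟪x, A x⟫ = ∑ |x k|² d k` is an infinite convex combination of the `d k`. Finitely
supported `x` realise every point of the convex hull of the `d k`, and limits of finite convex
combinations stay in the closed convex hull, so `cl W(A)` is the closed convex hull of the `d k`,
which is `conv {0, 1, i}` because `d k → 0`. A real point of `W(A)` has imaginary part
`∑_{k ≥ 1} |x k|² / k = 0`, so `x` is supported at `0` and the point is `d 0 = 1`.
Since `d k → 0`, `A` is the norm limit of the finite-rank operators `A ∘ P_s`, `P_s` the
coordinate projections, hence compact.
-/

open Filter Topology Set
open scoped lp

theorem Convex.mem_of_hasSum {ι E : Type*} [AddCommGroup E] [Module ℝ E] [TopologicalSpace E]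
    [IsTopologicalAddGroup E] [ContinuousSMul ℝ E] {C : Set E} (hC : Convex ℝ C)
    (hCc : IsClosed C) {w : ι → ℝ} {z : ι → E} {y : E} (hw₀ : ∀ i, 0 ≤ w i) (hw : HasSum w 1)
    (hz : ∀ i, z i ∈ C) (hy : HasSum (fun i => w i • z i) y) : y ∈ C := by
  have hlim : Tendsto (fun s : Finset ι => s.centerMass w z) atTop (𝓝 y) := by
    simpa [Finset.centerMass] using (hw.inv₀ one_ne_zero).smul hy
  refine hCc.mem_of_tendsto hlim ?_
  filter_upwards [hw.eventually (lt_mem_nhds one_pos)] with s hs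
  exact hC.centerMass_mem (fun i _ => hw₀ i) hs fun i _ => hz i

namespace lp

theorem hasSum_norm_sq {ι : Type*} {E : ι → Type*} [∀ i, NormedAddCommGroup (E i)]
    (x : lp E 2) : HasSum (fun i => ‖x i‖ ^ 2) (‖x‖ ^ 2) := by
  simpa using lp.hasSum_norm (p := 2) (by norm_num) x

variable {ι 𝕜 : Type*} [RCLike 𝕜] [DecidableEq ι] {p : ENNReal} [Fact (1 ≤ p)]

def finsetProj (s : Finset ι) : lp (fun _ : ι => 𝕜) p →L[𝕜] lp (fun _ : ι => 𝕜) p :=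
  ∑ k ∈ s, (lp.singleContinuousLinearMap 𝕜 _ p k).comp (lp.evalCLM 𝕜 _ p k)

theorem finsetProj_apply_apply (s : Finset ι) (x : lp (fun _ : ι => 𝕜) p) (j : ι) :
    finsetProj s x j = if j ∈ s then x j else 0 := by
  simp only [finsetProj, evalCLM, sum_apply, ContinuousLinearMap.comp_apply,
    LinearMap.mkContinuous_apply, evalₗ_apply, singleContinuousLinearMap_apply,
    AddSubgroup.val_finsetSum, lp.coeFn_single]
  exact (Finset.sum_apply j s _).trans (Finset.sum_pi_single j _ s)

theorem isCompactOperator_finsetProj (s : Finset ι) :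
    IsCompactOperator (finsetProj (𝕜 := 𝕜) (p := p) s) := by
  refine Submodule.sum_mem (compactOperator (RingHom.id 𝕜) (lp (fun _ : ι => 𝕜) p)
    (lp (fun _ : ι => 𝕜) p)) fun k _ => ?_
  exact (isCompactOperator_of_locallyCompactSpace_dom (lp.evalCLM 𝕜 (fun _ : ι => 𝕜) p k)).clm_comp
    (lp.singleContinuousLinearMap 𝕜 (fun _ : ι => 𝕜) p k)

end lp

def IsDiagonalOp {ι : Type*} (T : ℓ²(ι, ℂ) →L[ℂ] ℓ²(ι, ℂ)) (d : ι → ℂ) : Prop :=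
  ∀ x k, T x k = d k * x k

namespace IsDiagonalOp

variable {ι : Type*} {T : ℓ²(ι, ℂ) →L[ℂ] ℓ²(ι, ℂ)} {d : ι → ℂ}

theorem hasSum_inner (hT : IsDiagonalOp T d) (x : ℓ²(ι, ℂ)) :
    HasSum (fun k => ‖x k‖ ^ 2 • d k) ⟪x, T x⟫ := by
  suffices (fun k => ‖x k‖ ^ 2 • d k) = fun k => ⟪x k, T x k⟫ by
    rw [this]; exact lp.hasSum_inner x (T x)
  ext k
  rw [hT, RCLike.inner_apply, mul_right_comm, mul_assoc, Complex.conj_mul', Complex.real_smul]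
  push_cast
  ring

theorem numRange_subset (hT : IsDiagonalOp T d) {C : Set ℂ} (hC : Convex ℝ C) (hCc : IsClosed C)
    (hd : ∀ k, d k ∈ C) : numRange T ⊆ C := by
  rintro _ ⟨x, hx, rfl⟩
  refine hC.mem_of_hasSum hCc (fun k => by positivity) ?_ hd (hT.hasSum_inner x)
  simpa [hx] using lp.hasSum_norm_sq x

theorem convexHull_range_subset_numRange (hT : IsDiagonalOp T d) :
    convexHull ℝ (range d) ⊆ numRange T := by
  classical
  rw [convexHull_range_eq_exists_affineCombination]
  rintro _ ⟨s, w, hw₀, hw₁, rfl⟩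
  set x : ℓ²(ι, ℂ) := ∑ k ∈ s, lp.single 2 k (√(w k) : ℂ)
  have hx_apply : ∀ j, x j = if j ∈ s then (√(w j) : ℂ) else 0 := fun j => by
    simp only [x, lp.coeFn_sum, Finset.sum_apply, lp.coeFn_single, Finset.sum_pi_single]
  have hweight : ∀ j ∈ s, ‖x j‖ ^ 2 = w j := fun j hj => by
    rw [hx_apply, if_pos hj, Complex.norm_real, Real.norm_eq_abs, sq_abs, Real.sq_sqrt (hw₀ j hj)]
  have hsupp : ∀ j ∉ s, ‖x j‖ ^ 2 = 0 := fun j hj => by simp [hx_apply, hj]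
  refine ⟨x, ?_, ?_⟩
  · have hnorm : ∑ j ∈ s, ‖x j‖ ^ 2 = 1 := hw₁ ▸ Finset.sum_congr rfl hweight
    have h := (lp.hasSum_norm_sq x).unique (hnorm ▸ hasSum_sum_of_ne_finset_zero hsupp)
    exact (pow_eq_one_iff_of_nonneg (norm_nonneg x) two_ne_zero).mp h
  · rw [Finset.affineCombination_eq_linear_combination s d w hw₁,
      ← Finset.sum_congr rfl fun j hj => congrArg (· • d j) (hweight j hj)]
    exact (hT.hasSum_inner x).unique
      (hasSum_sum_of_ne_finset_zero fun j hj => by simp [hsupp j hj])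

theorem closure_numRange (hT : IsDiagonalOp T d) :
    closure (numRange T) = closedConvexHull ℝ (range d) := by
  refine (closure_minimal ?_ isClosed_closedConvexHull).antisymm ?_
  · exact hT.numRange_subset convex_closedConvexHull isClosed_closedConvexHull
      fun k => subset_closedConvexHull (mem_range_self k)
  · rw [closedConvexHull_eq_closure_convexHull]
    exact closure_mono hT.convexHull_range_subset_numRange

theorem eq_of_mem_numRange_of_im_eq_zero (hT : IsDiagonalOp T d) {j : ι} (hj : (d j).im = 0)
    (hd : ∀ k ≠ j, 0 < (d k).im) {z : ℂ} (hz : z ∈ numRange T) (hz_im : z.im = 0) : z = d j := by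
  obtain ⟨x, hx, rfl⟩ := hz
  have him : HasSum (fun k => ‖x k‖ ^ 2 * (d k).im) 0 := by
    simpa only [Complex.smul_im, smul_eq_mul, hz_im] using Complex.hasSum_im (hT.hasSum_inner x)
  have hsupp : ∀ k ≠ j, ‖x k‖ ^ 2 = 0 := by
    have hzero := (hasSum_zero_iff_of_nonneg fun k => by
      rcases eq_or_ne k j with rfl | hk
      · simp [hj]
      · exact mul_nonneg (by positivity) (hd k hk).le).mp him
    intro k hk
    simpa [(hd k hk).ne'] using congrFun hzero k
  have hxj : ‖x j‖ ^ 2 = 1 := by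
    rw [← (lp.hasSum_norm_sq x).unique (hasSum_single j hsupp), hx, one_pow]
  simpa [hxj] using (hT.hasSum_inner x).unique
    (hasSum_single j fun k hk => by simp [hsupp k hk])

theorem norm_sub_comp_finsetProj_le [DecidableEq ι] (hT : IsDiagonalOp T d) {s : Finset ι}
    {C : ℝ} (hC : 0 ≤ C) (hs : ∀ k ∉ s, ‖d k‖ ≤ C) : ‖T - T ∘L lp.finsetProj s‖ ≤ C := by
  refine ContinuousLinearMap.opNorm_le_bound _ hC fun x => ?_
  calc ‖(T - T ∘L lp.finsetProj s) x‖ ≤ ‖(C : ℂ) • x‖ := by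
        refine lp.norm_mono two_ne_zero fun k => ?_
        rw [sub_apply, ContinuousLinearMap.comp_apply, lp.coeFn_sub, Pi.sub_apply, hT, hT,
          lp.finsetProj_apply_apply, ← mul_sub, norm_mul, lp.coeFn_smul, Pi.smul_apply,
          smul_eq_mul, norm_mul, Complex.norm_real, Real.norm_of_nonneg hC]
        split_ifs with hk
        · simp [mul_nonneg hC (norm_nonneg _)]
        · simpa using mul_le_mul_of_nonneg_right (hs k hk) (norm_nonneg (x k))
    _ = C * ‖x‖ := by rw [norm_smul, Complex.norm_real, Real.norm_of_nonneg hC]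

theorem isCompactOperator (hT : IsDiagonalOp T d) (hd : Tendsto d cofinite (𝓝 0)) :
    IsCompactOperator T := by
  classical
  refine isCompactOperator_of_tendsto (l := atTop) (F := fun s => T ∘L lp.finsetProj s) ?_
    (Eventually.of_forall fun s => (lp.isCompactOperator_finsetProj s).clm_comp T)
  rw [Metric.tendsto_nhds]
  intro ε hε
  have hfin : {k | ε / 2 ≤ ‖d k‖}.Finite := by
    have hsmall : ∀ᶠ k in cofinite, ‖d k‖ < ε / 2 :=
      hd.norm.eventually (gt_mem_nhds (by rw [norm_zero]; positivity))
    simpa using eventually_cofinite.mp hsmall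
  filter_upwards [eventually_ge_atTop hfin.toFinset] with s hs
  rw [dist_eq_norm, ← norm_neg, neg_sub]
  refine (hT.norm_sub_comp_finsetProj_le (half_pos hε).le fun k hk => ?_).trans_lt (half_lt_self hε)
  by_contra! h
  exact hk (hs (hfin.mem_toFinset.mpr h.le))

end IsDiagonalOp
def diagEntry (k : ℕ) : ℂ := if k = 0 then 1 else Complex.I / k

theorem diagEntry_of_ne_zero {k : ℕ} (hk : k ≠ 0) : diagEntry k = ((k : ℝ)⁻¹ : ℝ) • Complex.I := by
  rw [diagEntry, if_neg hk, Complex.real_smul, div_eq_inv_mul]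
  push_cast
  rfl

theorem tendsto_diagEntry : Tendsto diagEntry cofinite (𝓝 0) := by
  rw [Nat.cofinite_eq_atTop]
  refine (tendsto_const_div_atTop_nhds_zero_nat Complex.I).congr' ?_
  filter_upwards [eventually_ne_atTop 0] with k hk
  simp [diagEntry, hk]

theorem im_diagEntry_pos {k : ℕ} (hk : k ≠ 0) : 0 < (diagEntry k).im := by
  rw [diagEntry_of_ne_zero hk, Complex.smul_im, Complex.I_im, smul_eq_mul, mul_one]
  positivity

theorem closedConvexHull_range_diagEntry :
    closedConvexHull ℝ (range diagEntry) = convexHull ℝ {0, 1, Complex.I} := by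
  have hhull := convex_convexHull ℝ ({0, 1, Complex.I} : Set ℂ)
  apply le_antisymm
  · refine closedConvexHull_min (range_subset_iff.2 fun k => ?_) hhull
      ((toFinite _).isCompact_convexHull ℝ).isClosed
    rcases eq_or_ne k 0 with rfl | hk
    · exact subset_convexHull ℝ _ (by simp [diagEntry])
    · rw [diagEntry_of_ne_zero hk]
      refine hhull.smul_mem_of_zero_mem (subset_convexHull ℝ _ (by simp))
        (subset_convexHull ℝ _ (by simp)) ⟨by positivity, ?_⟩
      exact inv_le_one_of_one_le₀ (by exact_mod_cast Nat.one_le_iff_ne_zero.mpr hk)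
  · refine convexHull_min ?_ convex_closedConvexHull
    rintro z (rfl | rfl | rfl)
    · exact closure_subset_closedConvexHull
        (mem_closure_of_tendsto tendsto_diagEntry (Eventually.of_forall mem_range_self))
    · exact subset_closedConvexHull ⟨0, by simp [diagEntry]⟩
    · exact subset_closedConvexHull ⟨1, by simp [diagEntry]⟩

/-- A compact diagonal operator with entries 1, i/k: cl(W(A)) = conv{0,1,i} but [0,1) ∩ W(A) = ∅. -/
theorem stmt15 (A : lp (fun _ : ℕ => ℂ) 2 →L[ℂ] lp (fun _ : ℕ => ℂ) 2)
    (hA0 : ∀ x : lp (fun _ : ℕ => ℂ) 2, A x 0 = x 0)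
    (hAk : ∀ (x : lp (fun _ : ℕ => ℂ) 2) (k : ℕ), 1 ≤ k →
      A x k = (Complex.I / (k : ℂ)) * x k) :
    IsCompactOperator ⇑A ∧
      closure (numRange A) = convexHull ℝ {0, 1, Complex.I} ∧
      ∀ t : ℝ, 0 ≤ t → t < 1 → (t : ℂ) ∉ numRange A := by
  have hA : IsDiagonalOp A diagEntry := by
    intro x k
    rcases eq_or_ne k 0 with rfl | hk
    · simp [diagEntry, hA0]
    · rw [hAk x k (Nat.one_le_iff_ne_zero.mpr hk), diagEntry, if_neg hk]
  refine ⟨hA.isCompactOperator tendsto_diagEntry, ?_, fun t _ ht hmem => ?_⟩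
  · rw [hA.closure_numRange, closedConvexHull_range_diagEntry]
  · have h := hA.eq_of_mem_numRange_of_im_eq_zero (j := 0) (by simp [diagEntry])
      (fun k hk => im_diagEntry_pos hk) hmem (Complex.ofReal_im t)
    rw [diagEntry, if_pos rfl, Complex.ofReal_eq_one] at h
    exact ht.ne h
end
end
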